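/- (Binomial identity) For all integers ℓ ≥ 1, e ≥ 1 and 1 ≤ i ≤ e, one has binom(i+ℓ−1, ℓ)·binom(e+ℓ, i+ℓ) = Σ_{j=i−1}^{e−1} binom(j, i−1)·binom(j+ℓ, ℓ). -/

import Mathlib

/-- binomial identity: for all integers `ℓ ≥ 1`, `e ≥ 1` and
`1 ≤ i ≤ e`, `binom(i+ℓ-1, ℓ)·binom(e+ℓ, i+ℓ) = Σ_{j=i-1}^{e-1} binom(j, i-1)·binom(j+ℓ, ℓ)`. -/
theorem stmt15 (ℓ e i : ℕ) (hl : 1 ≤ ℓ) (he : 1 ≤ e) (hi : 1 ≤ i) (hie : i ≤ e) :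
    (i + ℓ - 1).choose ℓ * (e + ℓ).choose (i + ℓ) =
      ∑ j ∈ Finset.Icc (i - 1) (e - 1), j.choose (i - 1) * (j + ℓ).choose ℓ := by
  obtain ⟨i, rfl⟩ : ∃ i', i = i' + 1 := ⟨i - 1, (Nat.succ_pred_eq_of_pos hi).symm⟩
  have h0 : i + 1 + ℓ - 1 = i + ℓ := by omega
  have h0' : i + 1 - 1 = i := rfl
  rw [h0, h0']
  have key : ∀ n, i + 1 ≤ n →
      (i + ℓ).choose ℓ * (n + ℓ).choose (i + 1 + ℓ) =
      ∑ j ∈ Finset.Icc i (n - 1), j.choose i * (j + ℓ).choose ℓ := by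
    intro n hn
    induction n, hn using Nat.le_induction with
    | base =>
      simp [Nat.add_sub_cancel, Finset.Icc_self, Nat.choose_self,
        show i + 1 + ℓ = i + ℓ + 1 by ring]
    | succ n hn ih =>
      obtain ⟨m, rfl⟩ : ∃ m, n = m + 1 := ⟨n - 1, by omega⟩
      rw [show m + 1 + 1 - 1 = m + 1 from rfl,
        Finset.sum_Icc_succ_top (by omega : i ≤ m + 1)]
      rw [show m + 1 - 1 = m from rfl] at ih
      set n := m + 1 with hn'
      have h2 : (n + 1 + ℓ).choose (i + 1 + ℓ) =
          (n + ℓ).choose (i + ℓ) + (n + ℓ).choose (i + 1 + ℓ) := by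
        rw [show n + 1 + ℓ = (n + ℓ) + 1 by ring,
          show i + 1 + ℓ = (i + ℓ) + 1 by ring, Nat.choose_succ_succ]
      have h3 : (i + ℓ).choose ℓ * (n + ℓ).choose (i + ℓ) =
          n.choose i * (n + ℓ).choose ℓ := by
        rw [mul_comm, Nat.choose_mul (n := n + ℓ) (by omega : ℓ ≤ i + ℓ),
          Nat.add_sub_cancel, Nat.add_sub_cancel, mul_comm]
      rw [h2, Nat.mul_add, ih, h3]
      omega
  exact key e (by omega)
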